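/- arXiv:1903.05005 — 3 statements merged into one kernel-verified Lean document; each statement's English description precedes it below -/
import Mathlib

section
/- There exists a closed distance magic labeling of the hypercube Qₙ if and only if n ≡ 1 (mod 4). -/
/-!
The Walsh characters `χ_s(x) = (-1)^(s ⬝ x)` diagonalise the closed-neighbourhood operator of
`Qₙ`, with eigenvalue `n + 1 - 2|s|`. So if `u` has constant closed-neighbourhood sums, its Walsh
coefficient vanishes at every `s ≠ 0` whose eigenvalue is nonzero. Unless `n ≡ 1 (mod 4)`, no `s` of
odd weight has eigenvalue `0`; hence `u` only involves characters with `χ_s(𝟙) = 1`, which forces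
`u (x + 𝟙) = u x`, and `u` is not injective.

For `n = 2w - 1` with `w` odd, label `x` by the binary number `g x`, where `g` is an additive
bijection of `𝔽₂ⁿ` each of whose rows has exactly `w` ones: the involution
`x ↦ x + (∑_P x) 𝟙_Q + (∑_Q x) 𝟙_{Qᶜ}` for disjoint `P`, `Q` of (even) size `w - 1`.
Moving from `x` to a neighbour `x + e_j` flips coordinate `i` of `g x` exactly for the `w` indices `j`
of row `i`, so whatever that coordinate is at `x`, it equals `1` at exactly `w` of the `n + 1`
points of the closed neighbourhood, and every closed-neighbourhood sum is `w (2ⁿ - 1) + n + 1`.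
-/

open Finset

namespace Hypercube

variable {ι : Type*}

section Walsh

variable [Fintype ι]

def walsh (s x : ι → ZMod 2) : ℤ := ∏ i, (-1) ^ (s i * x i).val

lemma walsh_comm (s x : ι → ZMod 2) : walsh s x = walsh x s := by
  simp only [walsh, mul_comm]

lemma walsh_add (s x y : ι → ZMod 2) : walsh s (x + y) = walsh s x * walsh s y := by
  have key : ∀ a b c : ZMod 2,
      (-1 : ℤ) ^ (a * (b + c)).val = (-1) ^ (a * b).val * (-1) ^ (a * c).val := by decide
  simp only [walsh, Pi.add_apply, key, prod_mul_distrib]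

lemma walsh_one (s : ι → ZMod 2) : walsh s 1 = (-1) ^ hammingNorm s := by
  have key : ∀ a : ZMod 2, (-1 : ℤ) ^ a.val = (-1) ^ (if a ≠ 0 then 1 else 0) := by decide
  simp only [walsh, Pi.one_apply, mul_one, key, prod_pow_eq_pow_sum, sum_boole]
  rfl

end Walsh

section ClosedNbhd

variable [Fintype ι] [DecidableEq ι]

def closedNbhd (x : ι → ZMod 2) : Finset (ι → ZMod 2) := {y | hammingDist x y ≤ 1}

lemma hammingNorm_le_one_iff {d : ι → ZMod 2} :
    hammingNorm d ≤ 1 ↔ d = 0 ∨ ∃ j, Pi.single j 1 = d := by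
  refine ⟨fun h => ?_, ?_⟩
  · rcases Nat.le_one_iff_eq_zero_or_eq_one.mp h with h0 | h1
    · exact .inl (hammingNorm_eq_zero.mp h0)
    · obtain ⟨j, hj⟩ := card_eq_one.mp h1
      refine .inr ⟨j, funext fun i => ?_⟩
      have hi : d i ≠ 0 ↔ i = j := by simpa using congrArg (i ∈ ·) hj
      by_cases hij : i = j
      · subst hij
        have : ∀ a : ZMod 2, a ≠ 0 → 1 = a := by decide
        simpa using this _ (hi.mpr rfl)
      · simpa [hij] using (not_not.mp (mt hi.mp hij)).symm
  · rintro (rfl | ⟨j, rfl⟩)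
    · simp
    · exact card_le_one.mpr fun a ha b hb => by simp_all [Pi.single_apply]

lemma sum_closedNbhd {M : Type*} [AddCommMonoid M] (x : ι → ZMod 2) (F : (ι → ZMod 2) → M) :
    ∑ y ∈ closedNbhd x, F y = F x + ∑ j, F (x + Pi.single j 1) := by
  have hball : ({d | hammingNorm d ≤ 1} : Finset (ι → ZMod 2))
      = insert 0 (univ.image fun j => Pi.single j 1) := by
    ext d; simp [hammingNorm_le_one_iff]
  have hnot : (0 : ι → ZMod 2) ∉ univ.image fun j => Pi.single j 1 := by simp
  calc ∑ y ∈ closedNbhd x, F y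
      = ∑ d ∈ ({d | hammingNorm d ≤ 1} : Finset (ι → ZMod 2)), F (x + d) := by
        rw [closedNbhd, sum_filter, sum_filter]
        refine (Fintype.sum_equiv (Equiv.addLeft x) _ _ fun d => ?_).symm
        simp [hammingDist_eq_hammingNorm]
    _ = F x + ∑ j, F (x + Pi.single j 1) := by
        rw [hball, sum_insert hnot, sum_image fun i _ j _ h => ?_, add_zero]
        simpa [Pi.single_apply, eq_comm] using congrFun h j

lemma card_closedNbhd (x : ι → ZMod 2) : #(closedNbhd x) = Fintype.card ι + 1 := by
  rw [card_eq_sum_ones, sum_closedNbhd]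
  simp [add_comm]

lemma sum_walsh (s : ι → ZMod 2) :
    ∑ x, walsh s x = if s = 0 then 2 ^ Fintype.card ι else 0 := by
  have key : ∀ a : ZMod 2, ∑ t : ZMod 2, (-1 : ℤ) ^ (a * t).val = if a = 0 then 2 else 0 := by
    decide
  simp only [walsh]
  rw [← Fintype.prod_sum (fun i t => (-1 : ℤ) ^ (s i * t).val)]
  simp [key, prod_ite_zero, funext_iff]

lemma sum_walsh_mul_walsh (x y : ι → ZMod 2) :
    ∑ s, walsh s x * walsh s y = if x = y then 2 ^ Fintype.card ι else 0 := by
  have neg_eq_self : -y = y := funext fun i => ZMod.neg_eq_self_mod_two (y i)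
  simp_rw [← walsh_add, walsh_comm _ (x + y), sum_walsh, add_eq_zero_iff_eq_neg, neg_eq_self]

lemma walsh_inversion (u : (ι → ZMod 2) → ℤ) (x : ι → ZMod 2) :
    2 ^ Fintype.card ι * u x = ∑ s, walsh s x * ∑ y, walsh s y * u y := by
  simp_rw [mul_sum, ← mul_assoc]
  rw [sum_comm]
  simp_rw [← sum_mul, sum_walsh_mul_walsh, ite_mul, zero_mul, sum_ite_eq, mem_univ, if_true]

lemma walsh_single (s : ι → ZMod 2) (j : ι) : walsh s (Pi.single j 1) = (-1) ^ (s j).val := by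
  rw [walsh, prod_eq_single j (fun i _ hij => by simp [hij]) (by simp)]
  simp

lemma sum_closedNbhd_walsh (s x : ι → ZMod 2) :
    ∑ y ∈ closedNbhd x, walsh s y = (Fintype.card ι + 1 - 2 * hammingNorm s) * walsh s x := by
  have key : ∀ a : ZMod 2, (-1 : ℤ) ^ a.val = 1 - 2 * (if a ≠ 0 then 1 else 0) := by decide
  simp only [sum_closedNbhd, walsh_add, walsh_single, ← mul_sum, key, sum_sub_distrib, sum_boole]
  simp [hammingNorm]
  ring

lemma sum_walsh_mul_eq_zero {u : (ι → ZMod 2) → ℤ} {k : ℤ}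
    (hu : ∀ x, ∑ y ∈ closedNbhd x, u y = k) {s : ι → ZMod 2} (hs : s ≠ 0)
    (hs' : (Fintype.card ι + 1 : ℤ) ≠ 2 * hammingNorm s) :
    ∑ x, walsh s x * u x = 0 := by
  have self_adjoint : ∑ x, walsh s x * ∑ y ∈ closedNbhd x, u y
      = ∑ y, (∑ x ∈ closedNbhd y, walsh s x) * u y := by
    simp_rw [closedNbhd, mul_sum, sum_mul, sum_filter]
    rw [sum_comm]
    simp_rw [hammingDist_comm]
  have h : (Fintype.card ι + 1 - 2 * hammingNorm s) * ∑ x, walsh s x * u x = 0 :=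
    calc _ = ∑ y, (∑ x ∈ closedNbhd y, walsh s x) * u y := by
          simp_rw [sum_closedNbhd_walsh, mul_sum, mul_assoc]
      _ = k * ∑ x, walsh s x := by simp_rw [← self_adjoint, hu, ← sum_mul, mul_comm]
      _ = 0 := by rw [sum_walsh, if_neg hs, mul_zero]
  exact (mul_eq_zero.mp h).resolve_left (sub_ne_zero.mpr hs')

lemma apply_add_eq_of_sum_walsh_mul_eq_zero (u : (ι → ZMod 2) → ℤ) (c : ι → ZMod 2)
    (h : ∀ s, walsh s c ≠ 1 → ∑ y, walsh s y * u y = 0) (x : ι → ZMod 2) :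
    u (x + c) = u x := by
  refine mul_left_cancel₀ (pow_ne_zero (Fintype.card ι) two_ne_zero) ?_
  rw [walsh_inversion, walsh_inversion]
  refine sum_congr rfl fun s _ => ?_
  by_cases hs : walsh s c = 1
  · rw [walsh_add, hs, mul_one]
  · rw [h s hs, mul_zero, mul_zero]

theorem card_mod_four_eq_one_of_sum_closedNbhd_eq [Nonempty ι] {u : (ι → ZMod 2) → ℤ}
    (hu : Function.Injective u) {k : ℤ} (hk : ∀ x, ∑ y ∈ closedNbhd x, u y = k) :
    Fintype.card ι % 4 = 1 := by
  by_contra hn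
  have hper : u (0 + 1) = u 0 := apply_add_eq_of_sum_walsh_mul_eq_zero u 1 (fun s hs => ?_) 0
  · exact (one_ne_zero : (1 : ι → ZMod 2) ≠ 0) (by simpa using hu hper)
  · have hodd : Odd (hammingNorm s) := by
      rw [walsh_one] at hs
      exact Nat.not_even_iff_odd.mp fun h => hs h.neg_one_pow
    refine sum_walsh_mul_eq_zero hk (fun h0 => ?_) ?_
    · simp [h0] at hodd
    · obtain ⟨m, hm⟩ := hodd
      omega

end ClosedNbhd

section Twist

variable [DecidableEq ι]

def twist (P Q : Finset ι) : (ι → ZMod 2) →+ (ι → ZMod 2) :=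
  AddMonoidHom.mk' (fun x i => x i + if i ∈ Q then ∑ j ∈ P, x j else ∑ j ∈ Q, x j) fun x y => by
    funext i
    simp only [Pi.add_apply, sum_add_distrib]
    split_ifs <;> abel

lemma twist_apply (P Q : Finset ι) (x : ι → ZMod 2) (i : ι) :
    twist P Q x i = x i + if i ∈ Q then ∑ j ∈ P, x j else ∑ j ∈ Q, x j := rfl

lemma twist_involutive {P Q : Finset ι} (hPQ : Disjoint P Q) (hP : Even #P) (hQ : Even #Q) :
    Function.Involutive (twist P Q) := by
  have nsmul_eq_zero {m : ℕ} (hm : Even m) (t : ZMod 2) : m • t = 0 := by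
    rw [nsmul_eq_mul, ZMod.natCast_eq_zero_iff_even.mpr hm, zero_mul]
  intro x
  have hsumP : ∑ j ∈ P, twist P Q x j = ∑ j ∈ P, x j := by
    rw [sum_congr rfl fun j hj => by rw [twist_apply, if_neg (disjoint_left.mp hPQ hj)],
      sum_add_distrib, sum_const, nsmul_eq_zero hP, add_zero]
  have hsumQ : ∑ j ∈ Q, twist P Q x j = ∑ j ∈ Q, x j := by
    rw [sum_congr rfl fun j hj => by rw [twist_apply, if_pos hj],
      sum_add_distrib, sum_const, nsmul_eq_zero hQ, add_zero]
  funext i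
  rw [twist_apply, hsumP, hsumQ, twist_apply]
  split_ifs <;> rw [add_assoc, CharTwo.add_self_eq_zero, add_zero]

end Twist

variable [Fintype ι]

lemma val_add_sum_val_add {w : ℕ} (hw : Fintype.card ι + 1 = 2 * w) (b : ZMod 2)
    (c : ι → ZMod 2) (hc : #{j | c j = 1} = w) :
    b.val + ∑ j, (b + c j).val = w := by
  have hcompl : #{j | c j = 1} + #{j | ¬c j = 1} = Fintype.card ι :=
    card_filter_add_card_filter_not _
  obtain rfl | rfl : b = 0 ∨ b = 1 := by revert b; decide
  · have key : ∀ a : ZMod 2, (0 + a).val = if a = 1 then 1 else 0 := by decide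
    simp only [key, sum_boole]
    simp [hc]
  · have key : ∀ a : ZMod 2, (1 + a).val = if ¬a = 1 then 1 else 0 := by decide
    have one_val : (1 : ZMod 2).val = 1 := rfl
    simp only [key, sum_boole, one_val, Nat.cast_id]
    omega

variable [DecidableEq ι]

lemma sum_closedNbhd_val {F : Type*} [FunLike F (ι → ZMod 2) (ι → ZMod 2)]
    [AddHomClass F (ι → ZMod 2) (ι → ZMod 2)] (g : F) {w : ℕ} (hw : Fintype.card ι + 1 = 2 * w)
    (hg : ∀ i, #{j | g (Pi.single j 1) i = 1} = w) (x : ι → ZMod 2) (i : ι) :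
    ∑ y ∈ closedNbhd x, (g y i).val = w := by
  simp only [sum_closedNbhd, map_add, Pi.add_apply]
  exact val_add_sum_val_add hw _ _ (hg i)

lemma card_filter_twist_single {P Q : Finset ι} (hPQ : Disjoint P Q) (i : ι) :
    #{j | twist P Q (Pi.single j 1) i = 1} = #(if i ∈ Q then P else Q) + 1 := by
  have hi : i ∉ if i ∈ Q then P else Q := by
    split_ifs with h
    · exact disjoint_right.mp hPQ h
    · exact h
  rw [← card_insert_of_notMem hi]
  congr 1
  ext j
  rcases eq_or_ne j i with rfl | hji
  · by_cases hjQ : j ∈ Q <;> simp_all [twist_apply]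
  · by_cases hiQ : i ∈ Q <;> simp_all [twist_apply, Pi.single_apply, hji.symm]

theorem exists_addEquiv_card_filter_single_eq (h : Fintype.card ι % 4 = 1) :
    ∃ g : (ι → ZMod 2) ≃+ (ι → ZMod 2),
      ∀ i, #{j | g (Pi.single j 1) i = 1} = (Fintype.card ι + 1) / 2 := by
  set m := (Fintype.card ι - 1) / 2
  obtain ⟨P, -, hP⟩ := exists_subset_card_eq (s := (univ : Finset ι)) (n := m) (by simp; omega)
  obtain ⟨Q, hQP, hQ⟩ := exists_subset_card_eq (s := univ \ P) (n := m)
    (by rw [card_sdiff_of_subset (subset_univ P), hP, card_univ]; omega)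
  have hPQ : Disjoint P Q := disjoint_of_subset_right hQP sdiff_disjoint.symm
  have hm : Even m := by rw [Nat.even_iff]; omega
  refine ⟨AddEquiv.mk' (twist_involutive hPQ (hP ▸ hm) (hQ ▸ hm)).toPerm
    (map_add (twist P Q)), fun i => ?_⟩
  change #{j | twist P Q (Pi.single j 1) i = 1} = _
  rw [card_filter_twist_single hPQ]
  split_ifs <;> omega

lemma sum_closedNbhd_finFunctionFinEquiv {n w : ℕ} (g : (Fin n → ZMod 2) ≃+ (Fin n → ZMod 2))
    (hw : n + 1 = 2 * w) (hg : ∀ i, #{j | g (Pi.single j 1) i = 1} = w) (x : Fin n → ZMod 2) :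
    ∑ y ∈ closedNbhd x,
        (((finFunctionFinEquiv : (Fin n → ZMod 2) ≃ Fin (2 ^ n)) (g y) : ℕ) + 1)
      = w * ∑ i : Fin n, 2 ^ (i : ℕ) + (n + 1) := by
  have binary_val (z : Fin n → ZMod 2) :
      ((finFunctionFinEquiv : (Fin n → ZMod 2) ≃ Fin (2 ^ n)) z : ℕ)
        = ∑ i, (z i).val * 2 ^ (i : ℕ) :=
    finFunctionFinEquiv_apply z
  rw [sum_add_distrib, ← card_eq_sum_ones, card_closedNbhd, Fintype.card_fin]
  simp_rw [binary_val]
  rw [sum_comm]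
  simp_rw [← sum_mul, sum_closedNbhd_val g (by simpa using hw) hg, mul_sum]

end Hypercube

/-- The hypercube `Qₙ` admits a closed distance magic labeling iff `n ≡ 1 (mod 4)`. -/
theorem stmt_9 (n : ℕ) (hn : 1 ≤ n) :
    (∃ (f : (Fin n → ZMod 2) ≃ Fin (2 ^ n)) (k : ℕ),
      ∀ x : Fin n → ZMod 2,
        ∑ y ∈ Finset.univ.filter (fun y => hammingDist x y ≤ 1), ((f y : ℕ) + 1) = k)
      ↔ n % 4 = 1 := by
  constructor
  · rintro ⟨f, k, hf⟩
    have : Nonempty (Fin n) := ⟨⟨0, hn⟩⟩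
    have hinj : Function.Injective fun y => (((f y : ℕ) + 1 : ℕ) : ℤ) := fun y z h =>
      f.injective (Fin.ext (by simpa using h))
    simpa using Hypercube.card_mod_four_eq_one_of_sum_closedNbhd_eq hinj (k := k) fun x => by
      simpa [Hypercube.closedNbhd] using congrArg (Nat.cast : ℕ → ℤ) (hf x)
  · intro h
    obtain ⟨g, hg⟩ := Hypercube.exists_addEquiv_card_filter_single_eq (ι := Fin n) (by simpa using h)
    exact ⟨g.toEquiv.trans (finFunctionFinEquiv : (Fin n → ZMod 2) ≃ Fin (2 ^ n)), _,
      Hypercube.sum_closedNbhd_finFunctionFinEquiv g (w := (n + 1) / 2) (by omega)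
        (by simpa using hg)⟩
end

section
/- Let n ≡ 1 (mod 4), and let A₀, ..., Aₙ be the distance matrices of the hypercube Qₙ. Then for every i with 0 ≤ i ≤ (n−1)/2, the kernel of A₀ + A₁ is contained in the kernel of A_i + A_{n−i}. -/
/-!
Diagonalise the distance matrices with the Walsh characters `χ_w(u) = (-1)^(w ⬝ u)`: each `A_i`
acts on `χ_w` by the Krawtchouk number `∑_{|c| = i} χ_w(c)`, which is `n - 2|w|` for `A₁` and
`(-1)^|w|` for the antipodal matrix `Aₙ`. On `ker (A₀ + A₁)` only characters with `n - 2|w| = -1`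
occur; then `|w| = (n + 1) / 2` is odd because `n ≡ 1 (mod 4)`, so `Aₙ` acts by `-1` and
`ker (A₀ + A₁) ⊆ ker (A₀ + Aₙ)`. Finally `A_i + A_{n-i} = A_i (A₀ + Aₙ)`.
-/

/-- The `i`-th distance matrix of the hypercube `Qₙ` (over ℝ). -/
noncomputable def distMatrix (n i : ℕ) :
    Matrix (Fin n → ZMod 2) (Fin n → ZMod 2) ℝ :=
  fun u v => if hammingDist u v = i then 1 else 0

open Finset Matrix

lemma AddChar.map_sum_eq_prod {ι A M : Type*} [AddCommMonoid A] [CommMonoid M]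
    (ψ : AddChar A M) (s : Finset ι) (f : ι → A) :
    ψ (∑ i ∈ s, f i) = ∏ i ∈ s, ψ (f i) := by
  classical
  induction s using Finset.induction_on with
  | empty => simp
  | insert a s ha ih => rw [sum_insert ha, prod_insert ha, AddChar.map_add_eq_mul, ih]

noncomputable def signChar : AddChar (ZMod 2) ℝ :=
  AddChar.zmodChar 2 (by norm_num : (-1 : ℝ) ^ 2 = 1)

lemma signChar_apply (a : ZMod 2) : signChar a = if a = 0 then 1 else -1 := by
  rw [signChar, AddChar.zmodChar_apply]
  rcases (by decide : ∀ a : ZMod 2, a = 0 ∨ a = 1) a with rfl | rfl <;> simp [ZMod.val_one]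

lemma signChar_injective : Function.Injective signChar := by
  intro a b h
  rw [signChar_apply, signChar_apply] at h
  rcases (by decide : ∀ a : ZMod 2, a = 0 ∨ a = 1) a with rfl | rfl <;>
    rcases (by decide : ∀ a : ZMod 2, a = 0 ∨ a = 1) b with rfl | rfl <;>
    first | rfl | norm_num at h

section Hypercube

variable {n : ℕ}

lemma hammingNorm_eq_one_iff (c : Fin n → ZMod 2) :
    hammingNorm c = 1 ↔ ∃ j, c = Pi.single j 1 := by
  constructor
  · intro hc
    obtain ⟨j, hj⟩ := card_eq_one.1 hc
    refine ⟨j, funext fun k ↦ ?_⟩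
    have hk : c k ≠ 0 ↔ k = j := by simpa using congrArg (k ∈ ·) hj
    rcases eq_or_ne k j with rfl | hkj
    · exact (by decide : ∀ a : ZMod 2, a ≠ 0 → a = 1) _ (hk.2 rfl) |>.trans (by simp)
    · simpa [hkj] using mt hk.1 hkj
  · rintro ⟨j, rfl⟩
    simp [hammingNorm, Pi.single_apply, filter_eq']

lemma hammingNorm_eq_card_iff (c : Fin n → ZMod 2) : hammingNorm c = n ↔ c = 1 := by
  have hcard : hammingNorm c = n ↔ #{j | c j ≠ 0} = #(univ : Finset (Fin n)) := by
    rw [card_univ, Fintype.card_fin]; rfl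
  rw [hcard, card_filter_eq_iff, funext_iff]
  exact forall_congr' fun j ↦ by simpa using (by decide : ∀ a : ZMod 2, a ≠ 0 ↔ a = 1) (c j)

lemma hammingDist_add_one (u v : Fin n → ZMod 2) :
    hammingDist u (v + 1) = n - hammingDist u v := by
  have hflip : ∀ j, u j ≠ (v + 1) j ↔ ¬ u j ≠ v j := fun j ↦
    (by decide : ∀ a b : ZMod 2, a ≠ b + 1 ↔ ¬ a ≠ b) (u j) (v j)
  have hsplit := card_filter_add_card_filter_not (s := univ) fun j ↦ u j ≠ v j
  rw [card_univ, Fintype.card_fin] at hsplit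
  rw [hammingDist, filter_congr fun j _ ↦ hflip j, hammingDist]
  omega

lemma hammingDist_eq_card_iff (u v : Fin n → ZMod 2) : hammingDist u v = n ↔ u = v + 1 := by
  rw [hammingDist_comm, hammingDist_eq_hammingNorm, hammingNorm_eq_card_iff, neg_add_eq_iff_eq_add]

noncomputable def walsh (w : Fin n → ZMod 2) : AddChar (Fin n → ZMod 2) ℝ :=
  signChar.compAddMonoidHom (AddMonoidHom.mk' (w ⬝ᵥ ·) (dotProduct_add w))

lemma walsh_apply (w u : Fin n → ZMod 2) : walsh w u = signChar (w ⬝ᵥ u) := rfl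

lemma walsh_comm (w u : Fin n → ZMod 2) : walsh w u = walsh u w := by
  rw [walsh_apply, walsh_apply, dotProduct_comm]

lemma walsh_single (w : Fin n → ZMod 2) (j : Fin n) :
    walsh w (Pi.single j 1) = signChar (w j) := by
  rw [walsh_apply, dotProduct_single, mul_one]

lemma walsh_mul_self (w c : Fin n → ZMod 2) : walsh w c * walsh w c = 1 := by
  rw [← AddChar.map_add_eq_mul, ZModModule.add_self, AddChar.map_zero_eq_one]

lemma walsh_injective : Function.Injective (walsh (n := n)) := by
  intro w w' h
  funext j
  apply signChar_injective
  rw [← walsh_single, ← walsh_single, h]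

lemma linearIndependent_walsh : LinearIndependent ℝ fun w : Fin n → ZMod 2 ↦ ⇑(walsh w) :=
  (AddChar.linearIndependent _ ℝ).comp walsh walsh_injective

noncomputable def walshTransform : ((Fin n → ZMod 2) → ℝ) →ₗ[ℝ] (Fin n → ZMod 2) → ℝ :=
  mulVecLin (of fun w u ↦ walsh w u)

lemma walshTransform_apply (y : (Fin n → ZMod 2) → ℝ) (w : Fin n → ZMod 2) :
    walshTransform y w = ∑ u, walsh w u * y u := rfl

lemma walshTransform_injective : Function.Injective (walshTransform (n := n)) := by
  refine (injective_iff_map_eq_zero _).2 fun y hy ↦ ?_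
  have hsum : ∑ u, y u • ⇑(walsh u) = 0 := by
    funext w
    simpa [walshTransform_apply, walsh_comm w, mul_comm] using congrFun hy w
  funext u
  exact Fintype.linearIndependent_iff.1 linearIndependent_walsh y hsum u

lemma walshTransform_translate (y : (Fin n → ZMod 2) → ℝ) (c w : Fin n → ZMod 2) :
    walshTransform (fun u ↦ y (u + c)) w = walsh w c * walshTransform y w := by
  rw [walshTransform_apply, walshTransform_apply, mul_sum]
  refine Fintype.sum_equiv (Equiv.addRight c) _ _ fun u ↦ ?_
  rw [Equiv.coe_addRight, AddChar.map_add_eq_mul]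
  linear_combination (walsh w u * y (u + c)) * (walsh_mul_self w c).symm

lemma distMatrix_mulVec (i : ℕ) (x : (Fin n → ZMod 2) → ℝ) :
    distMatrix n i *ᵥ x = ∑ c with hammingNorm c = i, fun u ↦ x (u + c) := by
  ext u
  rw [mulVec, dotProduct, Finset.sum_apply, sum_filter]
  refine (Fintype.sum_equiv (Equiv.addLeft u) _ _ fun c ↦ ?_).symm
  simp [distMatrix, hammingDist_eq_hammingNorm]

lemma distMatrix_zero : distMatrix n 0 = 1 := by
  ext u v
  simp [distMatrix, one_apply, hammingDist_eq_zero]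

lemma distMatrix_mul_distMatrix_self {i : ℕ} (hi : i ≤ n) :
    distMatrix n i * distMatrix n n = distMatrix n (n - i) := by
  ext u v
  have hd : hammingDist u v ≤ n := by simpa using hammingDist_le_card_fintype (x := u) (y := v)
  have hiff : n - hammingDist u v = i ↔ hammingDist u v = n - i := by omega
  simp only [distMatrix, mul_apply, hammingDist_eq_card_iff, mul_ite, mul_one, mul_zero,
    sum_ite_eq', mem_univ, if_true, hammingDist_add_one, hiff]

/-- The eigenvalue of `distMatrix n i` on the Walsh character `walsh w`, i.e. the Krawtchouk
polynomial `K_i` evaluated at `hammingNorm w`. -/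
noncomputable def krawtchouk (i : ℕ) (w : Fin n → ZMod 2) : ℝ :=
  ∑ c with hammingNorm c = i, walsh w c

lemma walshTransform_distMatrix_mulVec (i : ℕ) (x : (Fin n → ZMod 2) → ℝ)
    (w : Fin n → ZMod 2) :
    walshTransform (distMatrix n i *ᵥ x) w = krawtchouk i w * walshTransform x w := by
  rw [distMatrix_mulVec, map_sum, Finset.sum_apply, krawtchouk, sum_mul]
  exact sum_congr rfl fun c _ ↦ walshTransform_translate x c w

lemma krawtchouk_one (w : Fin n → ZMod 2) : krawtchouk 1 w = n - 2 * hammingNorm w := by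
  have hinj : Function.Injective fun j : Fin n ↦ (Pi.single j 1 : Fin n → ZMod 2) := by
    intro j k h
    by_contra hjk
    simpa [Pi.single_apply, hjk] using congrFun h j
  have hS : ({c | hammingNorm c = 1} : Finset (Fin n → ZMod 2)) = univ.image (Pi.single · 1) := by
    ext c
    simp only [mem_filter, mem_univ, true_and, mem_image, hammingNorm_eq_one_iff]
    exact exists_congr fun j ↦ eq_comm
  have hsplit := card_filter_add_card_filter_not (s := univ) fun j ↦ w j = 0
  rw [card_univ, Fintype.card_fin] at hsplit
  have hsplit' : (#{j | w j = 0} + #{j | w j ≠ 0} : ℝ) = n := by exact_mod_cast hsplit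
  rw [krawtchouk, hS, sum_image hinj.injOn]
  simp only [walsh_single, signChar_apply, sum_ite, sum_const, nsmul_eq_mul, mul_one, mul_neg]
  rw [hammingNorm]
  linear_combination hsplit'

lemma krawtchouk_card (w : Fin n → ZMod 2) : krawtchouk n w = (-1) ^ hammingNorm w := by
  have hS : ({c | hammingNorm c = n} : Finset (Fin n → ZMod 2)) = {1} := by
    ext c
    simp [hammingNorm_eq_card_iff]
  rw [krawtchouk, hS, sum_singleton, ← univ_sum_single (1 : Fin n → ZMod 2),
    AddChar.map_sum_eq_prod]
  simp only [Pi.one_apply, walsh_single, signChar_apply, prod_ite, prod_const_one, one_mul,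
    prod_const]
  rfl

theorem distMatrix_zero_add_distMatrix_self_mulVec_eq_zero (hn : n % 4 = 1)
    {x : (Fin n → ZMod 2) → ℝ} (hx : (distMatrix n 0 + distMatrix n 1) *ᵥ x = 0) :
    (distMatrix n 0 + distMatrix n n) *ᵥ x = 0 := by
  apply walshTransform_injective
  funext w
  have h1 := congrFun (congrArg walshTransform hx) w
  simp only [add_mulVec, map_add, map_zero, Pi.add_apply, Pi.zero_apply,
    walshTransform_distMatrix_mulVec, distMatrix_zero, one_mulVec] at h1 ⊢
  rw [krawtchouk_one] at h1
  rw [krawtchouk_card]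
  by_cases hw : 2 * hammingNorm w = n + 1
  · rw [(Nat.odd_iff.2 (by omega) : Odd (hammingNorm w)).neg_one_pow]
    ring
  · have hev : (1 + (n - 2 * hammingNorm w) : ℝ) ≠ 0 := by
      intro h
      exact hw (by exact_mod_cast (by linarith : (2 * hammingNorm w : ℝ) = n + 1))
    have hX : walshTransform x w = 0 :=
      (mul_eq_zero.1 (by linear_combination h1)).resolve_left hev
    rw [hX, mul_zero, add_zero]

end Hypercube

/-- For `n ≡ 1 (mod 4)` and `0 ≤ i ≤ (n−1)/2`, `ker (A₀ + A₁) ⊆ ker (A_i + A_{n−i})`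
for the distance matrices of `Qₙ`. -/
theorem stmt_13 (n : ℕ) (hn : n % 4 = 1) (i : ℕ) (hi : i ≤ (n - 1) / 2)
    (x : (Fin n → ZMod 2) → ℝ)
    (hx : (distMatrix n 0 + distMatrix n 1).mulVec x = 0) :
    (distMatrix n i + distMatrix n (n - i)).mulVec x = 0 := by
  have hin : i ≤ n := hi.trans ((Nat.div_le_self _ _).trans (Nat.sub_le _ _))
  have hfactor : distMatrix n i + distMatrix n (n - i) =
      distMatrix n i * (distMatrix n 0 + distMatrix n n) := by
    rw [mul_add, distMatrix_zero, mul_one, distMatrix_mul_distMatrix_self hin]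
  rw [hfactor, ← mulVec_mulVec, distMatrix_zero_add_distMatrix_self_mulVec_eq_zero hn hx,
    mulVec_zero]
end

section
/- If n ≡ 1 (mod 4), then for each i with 0 ≤ 2i+1 ≤ n, Qₙ admits a {2i, 2i+1}-magic labeling: there is a bijection f: 𝔽₂ⁿ → {1,...,2ⁿ} and a constant k such that for every vertex x, ∑_{y : d(x,y) ∈ {2i,2i+1}} f(y) = k. -/
/-!
Write `n = 4t + 1` and label a vertex `x` by the binary number whose `j`-th digit is the parity
`F x j` of `x` on the cyclic window `j, j + 1, …, j + 2t`. The map `F` is a linear bijection of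
`𝔽₂ⁿ`: two windows starting `2t` apart cover the cycle once and overlap in a single position,
so `F x = 0` forces `x` to be constant, hence zero.

For a shell `{y : d(x, y) ∈ D}` around `x`, the sum of the `j`-th digits counts the words `z` of
weight in `D` with `F z j = 1 + F x j`. This count does not depend on `x` as soon as every window
parity is balanced on the words of weight `2i` or `2i + 1`. Balance comes from an involution that
flips the parity of a window `W`: reflect the coordinates so that `W` minus its midpoint `p` is
swapped with the complement of `W`, then reset the coordinate `p` to the parity of the weight
plus one.
-/

open Finset Function

lemma hammingNorm_comp_equiv {ι β : Type*} [Fintype ι] [Zero β] [DecidableEq β] (z : ι → β)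
    (e : ι ≃ ι) : hammingNorm (z ∘ e) = hammingNorm z :=
  card_equiv e (by simp)

section Hamming

variable {ι β : Type*} [Fintype ι] [DecidableEq ι] [Fintype β] [DecidableEq β]

def weightShell [Zero β] (D : ℕ → Prop) [DecidablePred D] : Finset (ι → β) :=
  {z | D (hammingNorm z)}

lemma filter_hammingDist_eq_map_weightShell [AddGroup β] (D : ℕ → Prop) [DecidablePred D]
    (x : ι → β) :
    ({y | D (hammingDist x y)} : Finset (ι → β)) =
      (weightShell D).map (Equiv.addLeft x).toEmbedding := by
  ext y
  simp [weightShell, hammingDist_eq_hammingNorm]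

end Hamming

section ZModTwo

lemma sum_val_eq_card_filter_eq_one {α : Type*} (s : Finset α) (g : α → ZMod 2) :
    ∑ a ∈ s, (g a).val = #{a ∈ s | g a = 1} := by
  rw [card_filter]
  exact sum_congr rfl fun a _ => (by decide : ∀ c : ZMod 2, c.val = if c = 1 then 1 else 0) _

lemma sum_update_of_mem_zmod_two {α : Type*} [DecidableEq α] {s : Finset α} {p : α}
    (hp : p ∈ s) (y : α → ZMod 2) (c : ZMod 2) :
    ∑ q ∈ s, update y p c q = ∑ q ∈ s, y q + y p + c := by
  rw [sum_update_of_mem hp, sdiff_singleton_eq_erase, ← add_sum_erase s y hp]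
  grind

variable {α : Type*} [Fintype α]

lemma hammingNorm_eq_sum_val (z : α → ZMod 2) : hammingNorm z = ∑ q, (z q).val := by
  rw [hammingNorm, card_filter]
  exact sum_congr rfl fun q _ => (by decide : ∀ c : ZMod 2, (if c ≠ 0 then 1 else 0) = c.val) _

lemma cast_hammingNorm (z : α → ZMod 2) : (hammingNorm z : ZMod 2) = ∑ q, z q := by
  simp [hammingNorm_eq_sum_val]

lemma hammingNorm_update_add_val [DecidableEq α] (z : α → ZMod 2) (p : α) (c : ZMod 2) :
    hammingNorm (update z p c) + (z p).val = hammingNorm z + c.val := by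
  simp only [hammingNorm_eq_sum_val, ← add_sum_erase univ _ (mem_univ p), update_self]
  rw [sum_congr rfl fun q hq => by rw [update_of_ne (ne_of_mem_erase hq)]]
  ring

end ZModTwo

section Balanced

variable {V : Type*}

def IsBalancedOn (φ : V → ZMod 2) (S : Finset V) : Prop :=
  #{z ∈ S | φ z = 0} = #{z ∈ S | φ z = 1}

variable {φ : V → ZMod 2} {S : Finset V}

lemma IsBalancedOn.card_filter_eq (h : IsBalancedOn φ S) (c : ZMod 2) :
    #{z ∈ S | φ z = c} = #{z ∈ S | φ z = 1} := by
  fin_cases c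
  exacts [h, rfl]

lemma IsBalancedOn.comp_equiv (h : IsBalancedOn φ S) (g : V ≃ V)
    (hg : ∀ z, g z ∈ S ↔ z ∈ S) : IsBalancedOn (fun z => φ (g z)) S := by
  have hcard : ∀ c, #{z ∈ S | φ (g z) = c} = #{z ∈ S | φ z = c} := fun c =>
    card_equiv g (by simp [hg])
  rw [IsBalancedOn, hcard, hcard]
  exact h

lemma isBalancedOn_of_involutive (Ψ : V → V) (hΨ : Involutive Ψ) (hS : ∀ z ∈ S, Ψ z ∈ S)
    (hφ : ∀ z, φ (Ψ z) = φ z + 1) : IsBalancedOn φ S := by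
  refine card_equiv (hΨ.toPerm Ψ) fun z => ?_
  have hΨS : Ψ z ∈ S ↔ z ∈ S := ⟨fun h => hΨ z ▸ hS _ h, hS z⟩
  simp [hΨS, hφ]

end Balanced

section Reflection

variable {ι : Type*} [Fintype ι] [DecidableEq ι]

def reflectReset (σ : Equiv.Perm ι) (p : ι) (z : ι → ZMod 2) : ι → ZMod 2 :=
  update (z ∘ σ) p (1 + ∑ q, z q)

variable {σ : Equiv.Perm ι} {p : ι}

lemma reflectReset_involutive (hσ : Involutive σ) (hσp : σ p = p) :
    Involutive (reflectReset σ p) := by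
  intro z
  have hsum : ∑ q, reflectReset σ p z q = z p + 1 := by
    rw [reflectReset, sum_update_of_mem_zmod_two (mem_univ p), comp_apply, hσp]
    simp only [comp_apply, Equiv.sum_comp σ z]
    grind
  funext q
  by_cases hq : q = p
  · subst hq
    rw [reflectReset, update_self, hsum]
    grind
  · have hσq : σ q ≠ p := fun h => hq (by rw [← hσ q, h, hσp])
    simp only [reflectReset, update_of_ne hq, comp_apply, update_of_ne hσq, hσ q]

lemma hammingNorm_reflectReset (hσp : σ p = p) {i : ℕ} {z : ι → ZMod 2}
    (hz : hammingNorm z = 2 * i ∨ hammingNorm z = 2 * i + 1) :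
    hammingNorm (reflectReset σ p z) = 2 * i ∨
      hammingNorm (reflectReset σ p z) = 2 * i + 1 := by
  have hc : 1 + ∑ q, z q = ((hammingNorm z + 1 : ℕ) : ZMod 2) := by
    rw [← cast_hammingNorm]; push_cast; ring
  have h := hammingNorm_update_add_val (z ∘ σ) p (1 + ∑ q, z q)
  rw [hammingNorm_comp_equiv z σ, comp_apply, hσp, hc, ZMod.val_natCast] at h
  have hp : (z p).val < 2 := ZMod.val_lt (z p)
  rw [reflectReset, hc]
  omega

variable {W : Finset ι}

lemma sum_comp_involutive (hσ : Involutive σ) (hσp : σ p = p) (hp : p ∈ W)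
    (hσW : ∀ q ≠ p, σ q ∈ W ↔ q ∉ W) (z : ι → ZMod 2) :
    ∑ q ∈ W, z (σ q) = z p + ∑ q ∈ Wᶜ, z q := by
  have hsymm : ∀ q, σ.symm q = σ q := fun q => σ.symm_apply_eq.2 (hσ q).symm
  have hmap : W.map σ.toEmbedding = insert p Wᶜ := by
    ext q
    by_cases hq : q = p
    · simp [hq, hsymm, hσp, hp]
    · simp [mem_map_equiv, hq, hsymm, hσW q hq]
  rw [← sum_insert (by simpa using hp), ← hmap, sum_map]
  rfl

lemma sum_reflectReset (hσ : Involutive σ) (hσp : σ p = p) (hp : p ∈ W)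
    (hσW : ∀ q ≠ p, σ q ∈ W ↔ q ∉ W) (z : ι → ZMod 2) :
    ∑ q ∈ W, reflectReset σ p z q = ∑ q ∈ W, z q + 1 := by
  rw [reflectReset, sum_update_of_mem_zmod_two hp, comp_apply, hσp, ← sum_add_sum_compl W z]
  simp only [comp_apply]
  rw [sum_comp_involutive hσ hσp hp hσW]
  grind

theorem isBalancedOn_sum_of_involutive (hσ : Involutive σ) (hσp : σ p = p) (hp : p ∈ W)
    (hσW : ∀ q ≠ p, σ q ∈ W ↔ q ∉ W) (i : ℕ) :
    IsBalancedOn (fun z => ∑ q ∈ W, z q) (weightShell fun d => d = 2 * i ∨ d = 2 * i + 1) :=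
  isBalancedOn_of_involutive (reflectReset σ p) (reflectReset_involutive hσ hσp)
    (fun z hz => by
      simpa [weightShell] using hammingNorm_reflectReset hσp (by simpa [weightShell] using hz))
    (sum_reflectReset hσ hσp hp hσW)

end Reflection

def binaryLabeling {ι : Type*} {m : ℕ} (L : (ι → ZMod 2) ≃+ (Fin m → ZMod 2)) :
    (ι → ZMod 2) ≃ Fin (2 ^ m) :=
  L.toEquiv.trans finFunctionFinEquiv

theorem sum_binaryLabeling_filter_hammingDist {ι : Type*} [Fintype ι] [DecidableEq ι] {m : ℕ}
    (L : (ι → ZMod 2) ≃+ (Fin m → ZMod 2)) (D : ℕ → Prop) [DecidablePred D]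
    (hL : ∀ j, IsBalancedOn (fun z => L z j) (weightShell D)) (x : ι → ZMod 2) :
    ∑ y ∈ {y | D (hammingDist x y)}, ((binaryLabeling L y : ℕ) + 1) =
      ∑ j, #{z ∈ weightShell D | L z j = 1} * 2 ^ (j : ℕ) +
        #(weightShell D : Finset (ι → ZMod 2)) := by
  have hdigits : ∀ y, (binaryLabeling L y : ℕ) = ∑ j, (L y j).val * 2 ^ (j : ℕ) :=
    fun y => finFunctionFinEquiv_apply (L y)
  rw [filter_hammingDist_eq_map_weightShell, sum_map, sum_add_distrib, sum_const, smul_eq_mul,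
    mul_one]
  simp only [hdigits]
  rw [sum_comm]
  refine congrArg (· + _) (sum_congr rfl fun j _ => ?_)
  rw [← sum_mul, sum_val_eq_card_filter_eq_one, ← (hL j).card_filter_eq (1 - L x j)]
  refine congrArg (#· * _) (filter_congr fun z _ => ?_)
  simp [eq_sub_iff_add_eq']

section Window

variable {t : ℕ}

def windowMid (t : ℕ) : Fin (4 * t + 1) := ⟨2 * t, by omega⟩

def windowSum (t : ℕ) : (Fin (4 * t + 1) → ZMod 2) →+ (Fin (4 * t + 1) → ZMod 2) where
  toFun x j := ∑ q ∈ Iic (windowMid t), x (j + q)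
  map_zero' := by ext; simp
  map_add' x y := by ext; simp [sum_add_distrib]

lemma windowSum_apply (x : Fin (4 * t + 1) → ZMod 2) (j : Fin (4 * t + 1)) :
    windowSum t x j = ∑ q ∈ Iic (windowMid t), x (j + q) := rfl

lemma map_addLeft_Iic_windowMid :
    (Iic (windowMid t)).map (Equiv.addLeft (windowMid t)).toEmbedding =
      insert (windowMid t) (Iic (windowMid t))ᶜ := by
  ext q
  rw [mem_map_equiv, Equiv.addLeft_symm_apply]
  beta_reduce
  rw [neg_add_eq_sub]
  simp only [mem_insert, mem_compl, mem_Iic, Fin.le_def, Fin.ext_iff]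
  rcases le_or_gt (windowMid t) q with h | h
  · rw [Fin.sub_val_of_le h]; rw [Fin.le_def] at h; simp only [windowMid] at *; omega
  · rw [Fin.coe_sub_iff_lt.2 h]; rw [Fin.lt_def] at h; simp only [windowMid] at *; omega

lemma windowSum_add_windowSum_add_windowMid (x : Fin (4 * t + 1) → ZMod 2) (j : Fin (4 * t + 1)) :
    windowSum t x j + windowSum t x (j + windowMid t) = x (j + windowMid t) + ∑ q, x q := by
  have hshift : windowSum t x (j + windowMid t) =
      x (j + windowMid t) + ∑ q ∈ (Iic (windowMid t))ᶜ, x (j + q) := by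
    have h : ∑ q ∈ Iic (windowMid t), x (j + windowMid t + q) =
        ∑ q ∈ insert (windowMid t) (Iic (windowMid t))ᶜ, x (j + q) := by
      rw [← map_addLeft_Iic_windowMid, sum_map]
      simp [add_assoc]
    rw [windowSum_apply, h, sum_insert (by simp)]
  rw [hshift, windowSum_apply, ← Equiv.sum_comp (Equiv.addLeft j) x,
    ← sum_add_sum_compl (Iic (windowMid t))]
  simp only [Equiv.coe_addLeft]
  ring

lemma windowSum_injective : Injective (windowSum t) := by
  refine (injective_iff_map_eq_zero _).2 fun x hx => ?_
  have hconst : ∀ r, x r = ∑ q, x q := fun r => by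
    have h := windowSum_add_windowSum_add_windowMid x (r - windowMid t)
    rwa [hx, sub_add_cancel, Pi.zero_apply, Pi.zero_apply, add_zero, eq_comm,
      CharTwo.add_eq_zero] at h
  have h0 := congrFun hx 0
  rw [windowSum_apply, sum_congr rfl fun q _ => hconst _, sum_const, Fin.card_Iic,
    Pi.zero_apply] at h0
  funext r
  rw [hconst r, Pi.zero_apply, ← h0]
  simp [windowMid, add_smul, mul_smul, show (2 : ZMod 2) = 0 from rfl]

lemma windowSum_bijective : Bijective (windowSum t) :=
  Finite.injective_iff_bijective.1 windowSum_injective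

lemma revPerm_windowMid : Fin.revPerm (windowMid t) = windowMid t :=
  Fin.ext (by simp only [Fin.revPerm_apply, Fin.val_rev, windowMid]; omega)

lemma revPerm_mem_Iic_windowMid_iff {q : Fin (4 * t + 1)} (hq : q ≠ windowMid t) :
    Fin.revPerm q ∈ Iic (windowMid t) ↔ q ∉ Iic (windowMid t) := by
  rw [Ne, Fin.ext_iff] at hq
  simp only [windowMid, Fin.revPerm_apply, mem_Iic, Fin.le_def, Fin.val_rev] at hq ⊢
  omega

lemma isBalancedOn_windowSum (i : ℕ) (j : Fin (4 * t + 1)) :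
    IsBalancedOn (fun z => windowSum t z j) (weightShell fun d => d = 2 * i ∨ d = 2 * i + 1) := by
  have hbal := isBalancedOn_sum_of_involutive Fin.rev_involutive (revPerm_windowMid (t := t))
    (mem_Iic.2 le_rfl) (fun _ => revPerm_mem_Iic_windowMid_iff) i
  refine hbal.comp_equiv ((Equiv.addLeft j).symm.arrowCongr (Equiv.refl _)) fun z => ?_
  have hz : (Equiv.addLeft j).symm.arrowCongr (Equiv.refl _) z = z ∘ Equiv.addLeft j := rfl
  simp only [weightShell, mem_filter, mem_univ, true_and, hz, hammingNorm_comp_equiv]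

end Window

theorem stmt_15_general (n : ℕ) (hn : n % 4 = 1) (i : ℕ) :
    ∃ (f : (Fin n → ZMod 2) ≃ Fin (2 ^ n)) (k : ℕ),
      ∀ x : Fin n → ZMod 2,
        ∑ y ∈ Finset.univ.filter
            (fun y => hammingDist x y = 2 * i ∨ hammingDist x y = 2 * i + 1),
          ((f y : ℕ) + 1) = k := by
  obtain ⟨t, rfl⟩ : ∃ t, n = 4 * t + 1 := ⟨n / 4, by omega⟩
  exact ⟨_, _, sum_binaryLabeling_filter_hammingDist
    (AddEquiv.ofBijective (windowSum t) windowSum_bijective) _ (isBalancedOn_windowSum i)⟩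

/-- If `n ≡ 1 (mod 4)` then for each `i` with `2i+1 ≤ n`, the hypercube `Qₙ`
admits a `{2i, 2i+1}`-magic labeling. -/
theorem stmt_15 (n : ℕ) (hn : n % 4 = 1) (i : ℕ) (hi : 2 * i + 1 ≤ n) :
    ∃ (f : (Fin n → ZMod 2) ≃ Fin (2 ^ n)) (k : ℕ),
      ∀ x : Fin n → ZMod 2,
        ∑ y ∈ Finset.univ.filter
            (fun y => hammingDist x y = 2 * i ∨ hammingDist x y = 2 * i + 1),
          ((f y : ℕ) + 1) = k :=
  stmt_15_general n hn i
end
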